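/- arXiv:1504.00563 — 7 statements merged into one kernel-verified Lean document; each statement's English description precedes it below -/
import Mathlib

section
/- If σ ≥ 1, then the Stolz domain S_σ (minus {1}) shifted by 1, i.e. the set {1 - z : z ∈ S_σ, z ≠ 1}, is contained in the closed sector {w ∈ ℂ : |arg w| ≤ arccos(1/σ)}. -/
open Real Set

namespace Complex

theorem one_sub_norm_le_re_one_sub (z : ℂ) : 1 - ‖z‖ ≤ (1 - z).re := by
  simp only [sub_re, one_re]
  linarith [re_le_norm z]

theorem abs_arg_le_arccos_of_le_cos_arg {w : ℂ} {c : ℝ} (h : c ≤ Real.cos w.arg) :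
    |w.arg| ≤ arccos c := by
  calc |w.arg| = arccos (Real.cos |w.arg|) :=
        (arccos_cos (abs_nonneg _) (abs_arg_le_pi w)).symm
    _ = arccos (Real.cos w.arg) := by rw [Real.cos_abs]
    _ ≤ arccos c := arccos_le_arccos h

theorem abs_arg_le_arccos_of_mul_norm_le_re {w : ℂ} {c : ℝ} (hw : w ≠ 0)
    (h : c * ‖w‖ ≤ w.re) : |w.arg| ≤ arccos c := by
  apply abs_arg_le_arccos_of_le_cos_arg
  rwa [cos_arg hw, le_div_iff₀ (norm_pos_iff.mpr hw)]

end Complex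

theorem stmt0_general (σ : ℝ) (z : ℂ)
    (hz : z ∈ ({w : ℂ | ‖w‖ < 1 ∧
        ‖1 - w‖ / (1 - ‖w‖) < σ} ∪ {1}))
    (hz1 : z ≠ 1) :
    1 - z = 0 ∨ |(1 - z).arg| ≤ Real.arccos (1 / σ) := by
  obtain ⟨hz_lt_one, hz_stolz⟩ : ‖z‖ < 1 ∧ ‖1 - z‖ / (1 - ‖z‖) < σ :=
    hz.resolve_right hz1
  have hw : 1 - z ≠ 0 := sub_ne_zero.mpr hz1.symm
  have hgap : 0 < 1 - ‖z‖ := sub_pos.mpr hz_lt_one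
  have hσ : 0 < σ := (div_pos (norm_pos_iff.mpr hw) hgap).trans hz_stolz
  have hnorm : ‖1 - z‖ ≤ σ * (1 - z).re :=
    calc ‖1 - z‖ ≤ σ * (1 - ‖z‖) := ((div_lt_iff₀ hgap).mp hz_stolz).le
      _ ≤ σ * (1 - z).re := by gcongr; exact Complex.one_sub_norm_le_re_one_sub z
  refine Or.inr (Complex.abs_arg_le_arccos_of_mul_norm_le_re hw ?_)
  rwa [one_div_mul_eq_div, div_le_iff₀' hσ]

theorem stmt0 (σ : ℝ) (hσ : 1 ≤ σ) (z : ℂ)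
    (hz : z ∈ ({w : ℂ | ‖w‖ < 1 ∧
        ‖1 - w‖ / (1 - ‖w‖) < σ} ∪ {1}))
    (hz1 : z ≠ 1) :
    1 - z = 0 ∨ |(1 - z).arg| ≤ Real.arccos (1 / σ) :=
  stmt0_general σ z hz hz1
end

section
/- Let h(λ) = ∑_{n=0}^∞ cₙ λⁿ with cₙ ≥ 0 and ∑ cₙ = 1. Then for each σ ≥ 1, h maps the closure of the Stolz domain S̄_σ into itself. -/
open Finset MeasureTheory Metric

/-!
Powers preserve the Stolz domain: factoring `1 - wⁿ = (1 - w)(1 + w + ⋯ + wⁿ⁻¹)` gives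
`|1 - wⁿ| / (1 - |w|ⁿ) ≤ |1 - w| / (1 - |w|)`. The Stolz domain is convex, being the strict
sublevel set `{|1 - w| + σ|w| < σ}` of a convex function together with the point `1` where that
function equals `σ`. So for `z` in its closure `K`, `h(z) = ∑ cₙ zⁿ` is the expectation of `n ↦ zⁿ`
under the probability distribution `(cₙ)`, and lies in the closed convex set `K` by Jensen.
-/

theorem Convex.tsum_smul_mem {ι E : Type*} [Countable ι] [NormedAddCommGroup E]
    [NormedSpace ℝ E] [CompleteSpace E] {K : Set E} (hK : Convex ℝ K) (hKc : IsClosed K)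
    {c : ι → ℝ} (hc0 : ∀ i, 0 ≤ c i) (hc1 : HasSum c 1) {y : ι → E} (hyK : ∀ i, y i ∈ K)
    {C : ℝ} (hyC : ∀ i, ‖y i‖ ≤ C) : ∑' i, c i • y i ∈ K := by
  let _ : MeasurableSpace ι := ⊤
  let p : PMF ι := ⟨fun i => ENNReal.ofReal (c i), by
    simpa [← ENNReal.ofReal_tsum_of_nonneg hc0 hc1.summable, hc1.tsum_eq] using
      ENNReal.summable.hasSum (f := fun i => ENNReal.ofReal (c i))⟩
  have hp (i : ι) : (p i).toReal = c i := ENNReal.toReal_ofReal (hc0 i)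
  have hyi : Integrable y p.toMeasure := .of_bound .of_discrete C (.of_forall hyC)
  have hmem := hK.integral_mem hKc (.of_forall hyK) hyi
  simpa only [p.integral_eq_tsum y hyi, hp] using hmem

theorem ConvexOn.convex_insert_setOf_lt {E : Type*} [AddCommGroup E] [Module ℝ E]
    {f : E → ℝ} (hf : ConvexOn ℝ Set.univ f) {a : ℝ} {x₀ : E} (hx₀ : f x₀ ≤ a) :
    Convex ℝ (insert x₀ {x | f x < a}) := by
  refine convex_iff_forall_pos.2 fun x hx y hy s t hs ht hst => ?_
  have hcombo : f (s • x + t • y) ≤ s * f x + t * f y :=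
    hf.2 (Set.mem_univ x) (Set.mem_univ y) hs.le ht.le hst
  rcases hx with rfl | hx <;> rcases hy with rfl | hy
  · exact Or.inl (Convex.combo_self hst _)
  all_goals
    refine Or.inr (hcombo.trans_lt ?_)
    simp only [Set.mem_ofPred_eq] at *
    nlinarith [congrArg (· * a) hst]

theorem norm_one_sub_pow_mul_le {R : Type*} [NormedRing R] [NormOneClass R] {w : R}
    (hw : ‖w‖ ≤ 1) (n : ℕ) : ‖1 - w ^ n‖ * (1 - ‖w‖) ≤ ‖1 - w‖ * (1 - ‖w‖ ^ n) := by
  have hgeom : ‖∑ i ∈ range n, w ^ i‖ ≤ ∑ i ∈ range n, ‖w‖ ^ i :=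
    (norm_sum_le _ _).trans (sum_le_sum fun i _ => norm_pow_le w i)
  calc ‖1 - w ^ n‖ * (1 - ‖w‖) = ‖(1 - w) * ∑ i ∈ range n, w ^ i‖ * (1 - ‖w‖) := by
        rw [mul_neg_geom_sum]
    _ ≤ ‖1 - w‖ * (∑ i ∈ range n, ‖w‖ ^ i) * (1 - ‖w‖) :=
        mul_le_mul_of_nonneg_right ((norm_mul_le _ _).trans (by gcongr)) (sub_nonneg.2 hw)
    _ = ‖1 - w‖ * (1 - ‖w‖ ^ n) := by rw [mul_assoc, geom_sum_mul_neg]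

def stolzDomain (σ : ℝ) : Set ℂ := {w : ℂ | ‖w‖ < 1 ∧ ‖1 - w‖ / (1 - ‖w‖) < σ} ∪ {1}

section stolzDomain

variable {σ : ℝ}

theorem pow_mem_stolzDomain {w : ℂ} (hw : w ∈ stolzDomain σ) (n : ℕ) :
    w ^ n ∈ stolzDomain σ := by
  rcases hw with ⟨hw1, hwσ⟩ | rfl
  · cases n with
    | zero => exact Or.inr (pow_zero w)
    | succ n =>
      have hwn : ‖w‖ ^ (n + 1) < 1 := pow_lt_one₀ (norm_nonneg w) hw1 n.succ_ne_zero
      refine Or.inl ⟨by rwa [norm_pow], ?_⟩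
      rw [norm_pow]
      refine lt_of_le_of_lt ?_ hwσ
      rw [div_le_div_iff₀ (by linarith) (by linarith)]
      exact norm_one_sub_pow_mul_le hw1.le (n + 1)
  · exact Or.inr (one_pow n)

theorem stolzDomain_subset_closedBall : stolzDomain σ ⊆ closedBall 0 1 := by
  rintro w (⟨hw, -⟩ | rfl)
  · exact mem_closedBall_zero_iff.2 hw.le
  · simp

theorem stolzDomain_eq_insert (hσ : 0 < σ) :
    stolzDomain σ = insert 1 {w | ‖1 - w‖ + σ * ‖w‖ < σ} := by
  rw [stolzDomain, Set.union_singleton]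
  congr 1
  ext w
  simp only [Set.mem_ofPred_eq]
  constructor
  · rintro ⟨hw1, hwσ⟩
    have := (div_lt_iff₀ (sub_pos.2 hw1)).1 hwσ
    linarith
  · intro hw
    have hw1 : ‖w‖ < 1 := by nlinarith [norm_nonneg (1 - w)]
    exact ⟨hw1, (div_lt_iff₀ (sub_pos.2 hw1)).2 (by linarith)⟩

theorem convex_stolzDomain (hσ : 0 < σ) : Convex ℝ (stolzDomain σ) := by
  rw [stolzDomain_eq_insert hσ]
  refine ConvexOn.convex_insert_setOf_lt ?_ (by simp)
  refine ((convexOn_dist (1 : ℂ) convex_univ).add (convexOn_univ_norm.smul hσ.le)).congr ?_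
  intro w _
  simp [dist_eq_norm']

end stolzDomain

theorem stmt3 (c : ℕ → ℝ) (hnn : ∀ n, 0 ≤ c n) (hsum : Summable c)
    (h1 : ∑' n, c n = 1) (σ : ℝ) (hσ : 1 ≤ σ) (z : ℂ)
    (hz : z ∈ closure ({w : ℂ | ‖w‖ < 1 ∧
        ‖1 - w‖ / (1 - ‖w‖) < σ} ∪ {1})) :
    (∑' n, (c n : ℂ) * z ^ n) ∈ closure ({w : ℂ | ‖w‖ < 1 ∧
        ‖1 - w‖ / (1 - ‖w‖) < σ} ∪ {1}) := by
  change _ ∈ closure (stolzDomain σ)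
  have hpow (n : ℕ) : z ^ n ∈ closure (stolzDomain σ) :=
    map_mem_closure (f := (· ^ n)) (continuous_pow n) hz fun _ hw => pow_mem_stolzDomain hw n
  have hnorm (n : ℕ) : ‖z ^ n‖ ≤ 1 := by
    simpa using closure_minimal stolzDomain_subset_closedBall isClosed_closedBall (hpow n)
  have hconvex := (convex_stolzDomain (zero_lt_one.trans_le hσ)).closure
  simpa only [Complex.real_smul] using
    hconvex.tsum_smul_mem isClosed_closure hnn (h1 ▸ hsum.hasSum) hpow hnorm
end

section
/- Let σ ≥ 1 and ω = arccos(1/σ). Then the Cayley transform C(λ) = (1-λ)/(1+λ) maps the closure of the Stolz domain S_σ into the closed sector Σ̄_ω = {w : w = 0 or |arg w| ≤ ω}. -/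
/-!
The Stolz condition `‖1 - w‖ < σ (1 - ‖w‖)` together with `‖1 + w‖ ≤ 1 + ‖w‖` gives the closed
condition `‖1 - w‖ ‖1 + w‖ ≤ σ (1 - ‖w‖²)`, which therefore holds on the closure of the Stolz
domain. Since `Re C(z) · ‖1 + z‖² = 1 - ‖z‖²`, it says `‖C(z)‖ ≤ σ Re C(z)`, i.e.
`cos (arg C(z)) ≥ 1/σ`, and this is `|arg C(z)| ≤ arccos (1/σ)`.
-/

open Real

lemma Complex.re_cayley_mul_sq_norm (z : ℂ) :
    ((1 - z) / (1 + z)).re * ‖1 + z‖ ^ 2 = 1 - ‖z‖ ^ 2 := by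
  by_cases hz : 1 + z = 0
  · have hz' : z = -1 := by linear_combination hz
    simp [hz']
  have hnormSq : Complex.normSq (1 + z) ≠ 0 := by simpa using hz
  rw [Complex.div_re, ← Complex.normSq_eq_norm_sq, ← Complex.normSq_eq_norm_sq]
  field_simp
  simp only [Complex.normSq_apply, Complex.sub_re, Complex.add_re, Complex.sub_im,
    Complex.add_im, Complex.one_re, Complex.one_im]
  ring

lemma isClosed_setOf_norm_sub_mul_norm_add_le (σ : ℝ) :
    IsClosed {w : ℂ | ‖1 - w‖ * ‖1 + w‖ ≤ σ * (1 - ‖w‖ ^ 2)} :=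
  isClosed_le (by fun_prop) (by fun_prop)

lemma closure_stolz_subset (σ : ℝ) :
    closure ({w : ℂ | ‖w‖ < 1 ∧ ‖1 - w‖ / (1 - ‖w‖) < σ} ∪ {1}) ⊆
      {w : ℂ | ‖1 - w‖ * ‖1 + w‖ ≤ σ * (1 - ‖w‖ ^ 2)} := by
  refine closure_minimal ?_ (isClosed_setOf_norm_sub_mul_norm_add_le σ)
  rintro w (⟨hw, hstolz⟩ | rfl)
  · rw [div_lt_iff₀ (by linarith)] at hstolz
    have hadd : ‖1 + w‖ ≤ 1 + ‖w‖ := (norm_add_le _ _).trans_eq (by simp)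
    show ‖1 - w‖ * ‖1 + w‖ ≤ σ * (1 - ‖w‖ ^ 2)
    calc ‖1 - w‖ * ‖1 + w‖ ≤ σ * (1 - ‖w‖) * (1 + ‖w‖) :=
          mul_le_mul hstolz.le hadd (norm_nonneg _) ((norm_nonneg _).trans hstolz.le)
      _ = σ * (1 - ‖w‖ ^ 2) := by ring
  · simp

lemma Complex.norm_cayley_le_mul_re {σ : ℝ} {z : ℂ}
    (hz : ‖1 - z‖ * ‖1 + z‖ ≤ σ * (1 - ‖z‖ ^ 2)) :
    ‖(1 - z) / (1 + z)‖ ≤ σ * ((1 - z) / (1 + z)).re := by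
  by_cases h : 1 + z = 0
  · simp [h]
  have hpos : 0 < ‖1 + z‖ := norm_pos_iff.mpr h
  rw [← Complex.re_cayley_mul_sq_norm] at hz
  rw [norm_div, div_le_iff₀ hpos]
  nlinarith

lemma abs_le_arccos_of_le_cos {x c : ℝ} (hx : |x| ≤ π) (hc : c ≤ cos x) : |x| ≤ arccos c :=
  calc |x| = arccos (cos |x|) := (arccos_cos (abs_nonneg x) hx).symm
    _ = arccos (cos x) := by rw [cos_abs]
    _ ≤ arccos c := arccos_le_arccos hc

lemma Complex.abs_arg_le_arccos_of_norm_le_mul_re {σ : ℝ} (hσ : 0 < σ) {w : ℂ} (hw : w ≠ 0)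
    (h : ‖w‖ ≤ σ * w.re) : |w.arg| ≤ arccos (1 / σ) := by
  refine abs_le_arccos_of_le_cos (Complex.abs_arg_le_pi w) ?_
  rw [Complex.cos_arg hw, div_le_div_iff₀ hσ (norm_pos_iff.mpr hw)]
  linarith

theorem stmt4 (σ : ℝ) (hσ : 1 ≤ σ) (z : ℂ)
    (hz : z ∈ closure ({w : ℂ | ‖w‖ < 1 ∧
        ‖1 - w‖ / (1 - ‖w‖) < σ} ∪ {1})) :
    (1 - z) / (1 + z) = 0 ∨ |((1 - z) / (1 + z)).arg| ≤ Real.arccos (1 / σ) := by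
  rcases eq_or_ne ((1 - z) / (1 + z)) 0 with h | h
  · exact Or.inl h
  · exact Or.inr <| Complex.abs_arg_le_arccos_of_norm_le_mul_re (by linarith) h
      (Complex.norm_cayley_le_mul_re (closure_stolz_subset σ hz))
end

section
/- For all z in the open unit disc, min over φ ∈ [0, 2π) of |z - e^{iφ}|/|1 - e^{iφ}| equals (1 - |z|²)/(2|1 - z|). -/
open Real ComplexConjugate

/-!
The substitution `v = (1 - w)⁻¹` maps the unit circle minus `1` onto the line `re v = 1/2`, and
turns the ratio `‖z - w‖ / ‖1 - w‖` into `‖1 - (1 - z) v‖`. On that line the real part of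
`conj (1 - z) * (1 - (1 - z) v)` is the constant `(1 - ‖z‖²) / 2`, which gives the lower bound
`‖1 - z‖ ‖1 - (1 - z) v‖ ≥ (1 - ‖z‖²) / 2`; equality holds for the `v` making that product real,
namely `v = 1/2 + i z.im / ‖1 - z‖²`.
-/

namespace Complex

lemma sq_norm_eq_re_sq_add_im_sq (z : ℂ) : ‖z‖ ^ 2 = z.re ^ 2 + z.im ^ 2 := by
  rw [Complex.sq_norm, normSq_apply]; ring

lemma re_inv_one_sub_of_norm_eq_one {w : ℂ} (hw : ‖w‖ = 1) (hw1 : w ≠ 1) :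
    ((1 - w)⁻¹).re = 1 / 2 := by
  have hnormSq : normSq (1 - w) = 2 * (1 - w).re := by
    have := sq_norm_eq_re_sq_add_im_sq w
    simp only [normSq_apply, sub_re, one_re, sub_im, one_im, hw] at this ⊢
    linear_combination -this
  have hre : (1 - w).re ≠ 0 := by
    have := (normSq_pos.2 (sub_ne_zero.2 hw1.symm)).ne'
    rw [hnormSq] at this
    exact right_ne_zero_of_mul this
  rw [inv_re, hnormSq]
  field_simp

lemma norm_one_sub_inv_of_re_eq_half {v : ℂ} (hv : v.re = 1 / 2) : ‖1 - v⁻¹‖ = 1 := by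
  have hv0 : v ≠ 0 := fun h ↦ by simp [h] at hv
  have hnorm : ‖v - 1‖ = ‖v‖ := by
    have : ‖v - 1‖ ^ 2 = ‖v‖ ^ 2 := by
      simp only [sq_norm_eq_re_sq_add_im_sq, sub_re, one_re, sub_im, one_im, hv]
      ring
    exact (sq_eq_sq₀ (norm_nonneg _) (norm_nonneg _)).1 this
  rw [show 1 - v⁻¹ = (v - 1) / v by field_simp, norm_div, hnorm,
    div_self (norm_ne_zero_iff.2 hv0)]

lemma norm_sub_div_norm_one_sub (z : ℂ) {w : ℂ} (hw1 : w ≠ 1) :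
    ‖z - w‖ / ‖1 - w‖ = ‖1 - (1 - z) * (1 - w)⁻¹‖ := by
  rw [← norm_div]
  congr 1
  field_simp [sub_ne_zero.2 hw1.symm]
  ring

lemma re_conj_one_sub_mul_one_sub_mul (z : ℂ) {v : ℂ} (hv : v.re = 1 / 2) :
    (conj (1 - z) * (1 - (1 - z) * v)).re = (1 - ‖z‖ ^ 2) / 2 := by
  simp only [sq_norm_eq_re_sq_add_im_sq, mul_re, mul_im, sub_re, sub_im, one_re, one_im, conj_re,
    conj_im, hv]
  ring

lemma one_sub_sq_norm_div_two_le (z : ℂ) {v : ℂ} (hv : v.re = 1 / 2) :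
    (1 - ‖z‖ ^ 2) / 2 ≤ ‖1 - z‖ * ‖1 - (1 - z) * v‖ :=
  calc (1 - ‖z‖ ^ 2) / 2 = (conj (1 - z) * (1 - (1 - z) * v)).re :=
        (re_conj_one_sub_mul_one_sub_mul z hv).symm
    _ ≤ ‖conj (1 - z) * (1 - (1 - z) * v)‖ := re_le_norm _
    _ = ‖1 - z‖ * ‖1 - (1 - z) * v‖ := by rw [norm_mul, norm_conj]

lemma conj_one_sub_mul_one_sub_mul_eq (z : ℂ) (hz : z ≠ 1) :
    conj (1 - z) * (1 - (1 - z) * ⟨1 / 2, z.im / normSq (1 - z)⟩) = ((1 - ‖z‖ ^ 2) / 2 : ℝ) := by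
  have hne : normSq (1 - z) ≠ 0 := (normSq_pos.2 (sub_ne_zero.2 hz.symm)).ne'
  have hn : normSq (1 - z) = (1 - z.re) ^ 2 + z.im ^ 2 := by rw [normSq_apply]; simp; ring
  apply Complex.ext
  · exact re_conj_one_sub_mul_one_sub_mul z rfl
  · simp only [mul_re, mul_im, sub_re, sub_im, one_re, one_im, conj_re, conj_im, ofReal_im]
    field_simp
    linear_combination 2 * z.im * hn

lemma one_sub_sq_norm_div_le_norm_sub_div (z : ℂ) {w : ℂ} (hw : ‖w‖ = 1) (hw1 : w ≠ 1) :
    (1 - ‖z‖ ^ 2) / (2 * ‖1 - z‖) ≤ ‖z - w‖ / ‖1 - w‖ := by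
  have := one_sub_sq_norm_div_two_le z (re_inv_one_sub_of_norm_eq_one hw hw1)
  rw [norm_sub_div_norm_one_sub z hw1]
  apply div_le_of_le_mul₀ (by positivity) (norm_nonneg _)
  linarith

lemma exists_norm_sub_div_eq (z : ℂ) (hz : ‖z‖ ≤ 1) (hz1 : z ≠ 1) :
    ∃ w : ℂ, ‖w‖ = 1 ∧ w ≠ 1 ∧ ‖z - w‖ / ‖1 - w‖ = (1 - ‖z‖ ^ 2) / (2 * ‖1 - z‖) := by
  set v : ℂ := ⟨1 / 2, z.im / normSq (1 - z)⟩
  have hv : v.re = 1 / 2 := rfl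
  have hv0 : v ≠ 0 := fun h ↦ by simp [h] at hv
  have hw1 : 1 - v⁻¹ ≠ 1 := by simpa using hv0
  refine ⟨1 - v⁻¹, norm_one_sub_inv_of_re_eq_half hv, hw1, ?_⟩
  have hprod : ‖1 - z‖ * ‖1 - (1 - z) * v‖ = (1 - ‖z‖ ^ 2) / 2 := by
    rw [← norm_conj (1 - z), ← norm_mul, conj_one_sub_mul_one_sub_mul_eq z hz1, norm_real,
      Real.norm_of_nonneg (by nlinarith [norm_nonneg z])]
  have h1z : ‖1 - z‖ ≠ 0 := norm_ne_zero_iff.2 (sub_ne_zero.2 hz1.symm)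
  rw [norm_sub_div_norm_one_sub z hw1, sub_sub_cancel, inv_inv,
    eq_div_iff (mul_ne_zero two_ne_zero h1z)]
  linarith

lemma exp_mul_I_ne_one {φ : ℝ} (hφ : φ ∈ Set.Ioo 0 (2 * π)) : exp (φ * I) ≠ 1 := by
  intro h
  have : Circle.exp φ = Circle.exp 0 := by ext; simpa [Circle.coe_exp] using h
  exact hφ.1.ne' (Circle.exp_injOn_Ico (by simp) ⟨hφ.1.le, by simpa using hφ.2⟩
    ⟨le_rfl, two_pi_pos⟩ this)

lemma exists_mem_Ioo_exp_mul_I_eq {w : ℂ} (hw : ‖w‖ = 1) (hw1 : w ≠ 1) :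
    ∃ φ ∈ Set.Ioo 0 (2 * π), exp (φ * I) = w := by
  let c : Circle := ⟨w, mem_sphere_zero_iff_norm.2 hw⟩
  have hc : 1 ≠ c := fun h ↦ hw1 (congrArg Subtype.val h).symm
  refine ⟨Circle.angleDiff 1 c, ⟨Circle.angleDiff_pos hc, Circle.angleDiff_lt_two_pi 1 c⟩, ?_⟩
  simpa [Circle.coe_exp] using congrArg Subtype.val (Circle.exp_angleDiff_mul (x := 1) (y := c))

end Complex

theorem stmt5 (z : ℂ) (hz : ‖z‖ < 1) :
    IsLeast {q : ℝ | ∃ φ ∈ Set.Ioo (0 : ℝ) (2 * π),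
        q = ‖z - Complex.exp ((φ : ℂ) * Complex.I)‖ /
          ‖1 - Complex.exp ((φ : ℂ) * Complex.I)‖}
      ((1 - ‖z‖ ^ 2) / (2 * ‖1 - z‖)) := by
  obtain ⟨w, hw, hw1, hmin⟩ :=
    Complex.exists_norm_sub_div_eq z hz.le (by rintro rfl; simp at hz)
  obtain ⟨φ, hφ, rfl⟩ := Complex.exists_mem_Ioo_exp_mul_I_eq hw hw1
  refine ⟨⟨φ, hφ, hmin.symm⟩, ?_⟩
  rintro _ ⟨φ, hφ, rfl⟩
  exact Complex.one_sub_sq_norm_div_le_norm_sub_div z (Complex.norm_exp_ofReal_mul_I φ)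
    (Complex.exp_mul_I_ne_one hφ)
end

section
/- Let γ, β ∈ [0, π) with γ + β < π. Then for all z in the closed sector Σ̄_γ and λ in the closed sector Σ̄_β, |z + λ| ≥ cos((γ+β)/2)·(|z| + |λ|). -/
open Real ComplexConjugate

/-! The law of cosines gives `‖z + w‖² = ‖z‖² + ‖w‖² + 2‖z‖‖w‖ cos φ` with `φ = arg z - arg w`.
When `|φ| ≤ s ≤ π` we have `cos φ ≥ cos s = 2 cos²(s/2) - 1`, so
`‖z + w‖² ≥ (‖z‖ - ‖w‖)² + 4 cos²(s/2) ‖z‖‖w‖ ≥ cos²(s/2) (‖z‖ + ‖w‖)²`.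
For `z` in `Σ̄_γ` and `w` in `Σ̄_β`, both nonzero, take `s = γ + β`; if one of them is zero
the bound is just `cos ≤ 1`. -/

namespace Complex

theorem re_mul_conj_eq_norm_mul_norm_mul_cos_arg_sub (z w : ℂ) :
    (z * conj w).re = ‖z‖ * ‖w‖ * Real.cos (z.arg - w.arg) := by
  rw [Real.cos_sub, mul_re, conj_re, conj_im, ← norm_mul_cos_arg z, ← norm_mul_cos_arg w,
    ← norm_mul_sin_arg z, ← norm_mul_sin_arg w]
  ring

theorem norm_add_sq_eq_law_cos (z w : ℂ) :
    ‖z + w‖ ^ 2 = ‖z‖ ^ 2 + ‖w‖ ^ 2 + 2 * (‖z‖ * ‖w‖ * Real.cos (z.arg - w.arg)) := by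
  rw [Complex.sq_norm, normSq_add, ← Complex.sq_norm, ← Complex.sq_norm, re_mul_conj_eq_norm_mul_norm_mul_cos_arg_sub]

theorem cos_half_mul_norm_add_norm_le_norm_add {z w : ℂ} {s : ℝ}
    (hs : |z.arg - w.arg| ≤ s) (hsπ : s ≤ π) :
    Real.cos (s / 2) * (‖z‖ + ‖w‖) ≤ ‖z + w‖ := by
  have hs0 : 0 ≤ s := (abs_nonneg _).trans hs
  have hc0 : 0 ≤ Real.cos (s / 2) :=
    Real.cos_nonneg_of_mem_Icc ⟨by linarith [pi_pos], by linarith⟩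
  have hc1 : Real.cos (s / 2) ≤ 1 := Real.cos_le_one _
  have hcos : Real.cos s ≤ Real.cos (z.arg - w.arg) := by
    rw [← Real.cos_abs (z.arg - w.arg)]
    exact Real.cos_le_cos_of_nonneg_of_le_pi (abs_nonneg _) hsπ hs
  have hdouble : Real.cos s = 2 * Real.cos (s / 2) ^ 2 - 1 := by
    rw [← Real.cos_two_mul, mul_div_cancel₀ s two_ne_zero]
  have hsq : (Real.cos (s / 2) * (‖z‖ + ‖w‖)) ^ 2 ≤ ‖z + w‖ ^ 2 := by
    rw [norm_add_sq_eq_law_cos]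
    nlinarith [mul_le_mul_of_nonneg_left hcos (mul_nonneg (norm_nonneg z) (norm_nonneg w)),
      mul_nonneg (by nlinarith : 0 ≤ 1 - Real.cos (s / 2) ^ 2) (sq_nonneg (‖z‖ - ‖w‖))]
  exact le_of_sq_le_sq hsq (norm_nonneg _)

end Complex

theorem stmt7_general (γ β : ℝ)
    (hsum : γ + β < π) (z w : ℂ)
    (hz : z = 0 ∨ |z.arg| ≤ γ) (hw : w = 0 ∨ |w.arg| ≤ β) :
    Real.cos ((γ + β) / 2) * (‖z‖ + ‖w‖) ≤
      ‖z + w‖ := by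
  rcases hz with rfl | hz
  · simpa using mul_le_of_le_one_left (norm_nonneg w) (Real.cos_le_one _)
  rcases hw with rfl | hw
  · simpa using mul_le_of_le_one_left (norm_nonneg z) (Real.cos_le_one _)
  exact Complex.cos_half_mul_norm_add_norm_le_norm_add
    ((abs_sub _ _).trans (add_le_add hz hw)) hsum.le

theorem stmt7 (γ β : ℝ) (hγ : γ ∈ Set.Ico 0 π) (hβ : β ∈ Set.Ico 0 π)
    (hsum : γ + β < π) (z w : ℂ)
    (hz : z = 0 ∨ |z.arg| ≤ γ) (hw : w = 0 ∨ |w.arg| ≤ β) :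
    Real.cos ((γ + β) / 2) * (‖z‖ + ‖w‖) ≤
      ‖z + w‖ :=
  stmt7_general γ β hsum z w hz hw
end

section
/- Let R > 0, β ∈ (-π/2, π/2), and set b = cos β/(1 + R²). Then for all r ∈ (0, R): (i) |(1 - re^{iβ})/(1 + re^{iβ})| ≤ (1 - br)/(1 + br), and (ii) |1 + re^{iβ}|² ≥ (1 + br)². -/
/-!
Write `z = r e^{iβ}`, so `‖z‖ = r` and `Re z = r cos β`, and put `y = b r`. Since
`‖1 ± z‖² = 1 ± 2 Re z + ‖z‖²`, squaring (i) and clearing denominators reduces it to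
`b r (1 + r²) ≤ Re z (1 + y²)`, which holds because `b (1 + r²) ≤ b (1 + R²) = cos β`.
Part (ii) is `1 + 2y + y² ≤ 1 + 2 Re z + r²`, which follows from `b ≤ cos β` and `b ≤ 1`.
-/

open Real

namespace Complex

theorem sq_norm_one_add (z : ℂ) : ‖1 + z‖ ^ 2 = 1 + 2 * z.re + ‖z‖ ^ 2 := by
  simp only [Complex.sq_norm, normSq_add, map_one, one_mul, conj_re]
  ring

theorem sq_norm_one_sub (z : ℂ) : ‖1 - z‖ ^ 2 = 1 - 2 * z.re + ‖z‖ ^ 2 := by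
  simp only [Complex.sq_norm, normSq_sub, map_one, one_mul, conj_re]
  ring

theorem norm_ofReal_mul_exp_mul_I {r : ℝ} (hr : 0 ≤ r) (β : ℝ) :
    ‖(r : ℂ) * exp (β * I)‖ = r := by
  rw [norm_mul, norm_exp_ofReal_mul_I, Complex.norm_of_nonneg hr, mul_one]

theorem re_ofReal_mul_exp_mul_I (r β : ℝ) : ((r : ℂ) * exp (β * I)).re = r * Real.cos β := by
  rw [re_ofReal_mul, exp_ofReal_mul_I_re]

theorem sq_one_add_mul_norm_le_sq_norm_one_add {z : ℂ} {b : ℝ} (hb₀ : 0 ≤ b) (hb₁ : b ≤ 1)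
    (h : b * ‖z‖ ≤ z.re) : (1 + b * ‖z‖) ^ 2 ≤ ‖1 + z‖ ^ 2 := by
  have hsq : (b * ‖z‖) ^ 2 ≤ ‖z‖ ^ 2 := by
    rw [mul_pow]
    exact mul_le_of_le_one_left (by positivity) (pow_le_one₀ hb₀ hb₁)
  rw [sq_norm_one_add]
  linarith

theorem norm_one_sub_div_one_add_le {z : ℂ} {b : ℝ} (hb : 0 ≤ b)
    (h : b * ‖z‖ * (1 + ‖z‖ ^ 2) ≤ z.re) :
    ‖(1 - z) / (1 + z)‖ ≤ (1 - b * ‖z‖) / (1 + b * ‖z‖) := by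
  set t := ‖z‖
  set y := b * t
  have ht : 0 ≤ t := norm_nonneg z
  have hy : 0 ≤ y := mul_nonneg hb ht
  have hre : 0 ≤ z.re := (by positivity : 0 ≤ y * (1 + t ^ 2)).trans h
  -- from `y (1 + t²) ≤ Re z ≤ t` and `2t ≤ 1 + t²`
  have hy_le_one : y ≤ 1 := by
    have : y * (1 + t ^ 2) ≤ t := h.trans (re_le_norm z)
    nlinarith [sq_nonneg (t - 1)]
  have hpos : 0 < ‖1 + z‖ := by
    have := re_le_norm (1 + z)
    rw [add_re, one_re] at this
    linarith
  rw [norm_div, div_le_div_iff₀ hpos (by positivity)]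
  refine le_of_pow_le_pow_left₀ two_ne_zero (mul_nonneg (sub_nonneg.2 hy_le_one) hpos.le) ?_
  rw [mul_pow, mul_pow, sq_norm_one_sub, sq_norm_one_add]
  nlinarith [mul_nonneg hre (sq_nonneg y)]

end Complex

theorem stmt9_general (R β : ℝ) (hβ : β ∈ Set.Ioo (-(π / 2)) (π / 2))
    (b : ℝ) (hb : b = Real.cos β / (1 + R ^ 2)) (r : ℝ) (hr : r ∈ Set.Ioo 0 R) :
    ‖(1 - (r : ℂ) * Complex.exp ((β : ℂ) * Complex.I)) /
        (1 + (r : ℂ) * Complex.exp ((β : ℂ) * Complex.I))‖ ≤ (1 - b * r) / (1 + b * r) ∧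
    (1 + b * r) ^ 2 ≤
      ‖1 + (r : ℂ) * Complex.exp ((β : ℂ) * Complex.I)‖ ^ 2 := by
  obtain ⟨hr₀, hrR⟩ := hr
  have hcos : 0 ≤ Real.cos β := (Real.cos_pos_of_mem_Ioo hβ).le
  have hb₀ : 0 ≤ b := hb ▸ div_nonneg hcos (by positivity)
  have hb₁ : b ≤ 1 :=
    hb ▸ div_le_one_of_le₀ (by linarith [Real.cos_le_one β, sq_nonneg R]) (by positivity)
  have hb_cos : b * (1 + r ^ 2) ≤ Real.cos β :=
    calc b * (1 + r ^ 2) ≤ b * (1 + R ^ 2) := by gcongr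
      _ = Real.cos β := by rw [hb, div_mul_cancel₀ _ (by positivity)]
  set z := (r : ℂ) * Complex.exp ((β : ℂ) * Complex.I)
  have hz : ‖z‖ = r := Complex.norm_ofReal_mul_exp_mul_I hr₀.le β
  have hre : z.re = r * Real.cos β := Complex.re_ofReal_mul_exp_mul_I r β
  refine ⟨?_, ?_⟩
  · rw [← hz]
    refine Complex.norm_one_sub_div_one_add_le hb₀ ?_
    rw [hz, hre, mul_right_comm, mul_comm r]
    exact mul_le_mul_of_nonneg_right hb_cos hr₀.le
  · rw [← hz]
    refine Complex.sq_one_add_mul_norm_le_sq_norm_one_add hb₀ hb₁ ?_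
    rw [hz, hre, mul_comm r]
    exact mul_le_mul_of_nonneg_right
      ((le_mul_of_one_le_right hb₀ (le_add_of_nonneg_right (sq_nonneg r))).trans hb_cos) hr₀.le

theorem stmt9 (R β : ℝ) (hR : 0 < R) (hβ : β ∈ Set.Ioo (-(π / 2)) (π / 2))
    (b : ℝ) (hb : b = Real.cos β / (1 + R ^ 2)) (r : ℝ) (hr : r ∈ Set.Ioo 0 R) :
    ‖(1 - (r : ℂ) * Complex.exp ((β : ℂ) * Complex.I)) /
        (1 + (r : ℂ) * Complex.exp ((β : ℂ) * Complex.I))‖ ≤ (1 - b * r) / (1 + b * r) ∧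
    (1 + b * r) ^ 2 ≤
      ‖1 + (r : ℂ) * Complex.exp ((β : ℂ) * Complex.I)‖ ^ 2 :=
  stmt9_general R β hβ b hb r hr
end

section
/- For ε ∈ [0, 1), the function g_ε(λ) = ((2-ε)λ - ε)/(2 + ε + ελ) has the power series expansion g_ε(λ) = -ε/(2+ε) + (4/(2+ε)²)·∑_{n=0}^∞ (-1)ⁿ εⁿ λ^{n+1}/(2+ε)ⁿ for |λ| ≤ 1, and the sum of absolute values of its Taylor coefficients equals 1, i.e. ε/(2+ε) + (4/(2+ε)²)·∑_{n=0}^∞ εⁿ/(2+ε)ⁿ = 1. -/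
/-!
Writing `a = 2 + ε`, the function is the Möbius map `-ε/a + (4/a²) · a z/(a + ε z)`, and
`a z/(a + ε z) = z/(1 + (ε/a) z)` expands as a geometric series in `-(ε/a) z`, which converges
because `|ε z| ≤ ε < a` on the closed disc. The coefficients have absolute values
`ε/a` and `(4/a²)(ε/a)ⁿ`, whose sum is `ε/a + (4/a²) · a/2 = (ε + 2)/a = 1`.
-/

lemma add_ne_zero_of_norm_lt {E : Type*} [SeminormedAddCommGroup E] {a b : E}
    (h : ‖b‖ < ‖a‖) : a + b ≠ 0 := by
  intro hab
  rw [eq_neg_of_add_eq_zero_left hab, norm_neg] at h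
  exact lt_irrefl _ h

theorem tsum_alternating_geometric_mul {𝕜 : Type*} [NormedField 𝕜] [CompleteSpace 𝕜]
    {a c z : 𝕜} (h : ‖c * z‖ < ‖a‖) :
    ∑' n : ℕ, (-1) ^ n * c ^ n * z ^ (n + 1) / a ^ n = a * z / (a + c * z) := by
  have ha : a ≠ 0 := norm_pos_iff.1 ((norm_nonneg _).trans_lt h)
  have hacz : a + c * z ≠ 0 := add_ne_zero_of_norm_lt h
  have hratio : ‖-(c * z / a)‖ < 1 := by
    rwa [norm_neg, norm_div, div_lt_one (norm_pos_iff.2 ha)]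
  calc ∑' n : ℕ, (-1) ^ n * c ^ n * z ^ (n + 1) / a ^ n
      = z * ∑' n : ℕ, (-(c * z / a)) ^ n := by
        rw [← tsum_mul_left]
        congr 1 with n
        rw [neg_pow (c * z / a), div_pow, mul_pow, pow_succ]
        ring
    _ = a * z / (a + c * z) := by
        rw [tsum_geometric_of_norm_lt_one hratio]
        field_simp
        ring

theorem stmt10 (ε : ℝ) (hε : ε ∈ Set.Ico (0 : ℝ) 1) :
    (∀ z : ℂ, ‖z‖ ≤ 1 →
      ((2 - (ε : ℂ)) * z - (ε : ℂ)) / (2 + (ε : ℂ) + (ε : ℂ) * z) =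
        -(ε : ℂ) / (2 + (ε : ℂ)) +
          (4 / (2 + (ε : ℂ)) ^ 2) *
            ∑' n : ℕ, (-1) ^ n * (ε : ℂ) ^ n * z ^ (n + 1) / (2 + (ε : ℂ)) ^ n) ∧
    ε / (2 + ε) + (4 / (2 + ε) ^ 2) * ∑' n : ℕ, ε ^ n / (2 + ε) ^ n = 1 := by
  obtain ⟨hε0, -⟩ := hε
  refine ⟨fun z hz => ?_, ?_⟩
  · have hconv : ‖(ε : ℂ) * z‖ < ‖2 + (ε : ℂ)‖ := by
      rw [show 2 + (ε : ℂ) = ((2 + ε : ℝ) : ℂ) by push_cast; rfl, norm_mul,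
        Complex.norm_of_nonneg hε0, Complex.norm_of_nonneg (by linarith)]
      nlinarith [norm_nonneg z]
    have ha : 2 + (ε : ℂ) ≠ 0 := norm_pos_iff.1 ((norm_nonneg _).trans_lt hconv)
    have hden : 2 + (ε : ℂ) + ε * z ≠ 0 := add_ne_zero_of_norm_lt hconv
    rw [tsum_alternating_geometric_mul hconv]
    field_simp
    ring
  · have hratio : ε / (2 + ε) < 1 := by rw [div_lt_one (by linarith)]; linarith
    simp_rw [← div_pow]
    rw [tsum_geometric_of_lt_one (by positivity) hratio]
    have : 2 + ε ≠ 0 := by linarith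
    field_simp
    ring
end
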